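/- arXiv:2308.03071 — 2 statements merged into one kernel-verified Lean document; each statement's English description precedes it below -/
import Mathlib

section
/- Let d ≥ 2 and let Λ ⊆ K̃^d be a well rounded unimodular lattice. Then μ(Λ) ≤ q^{-d}, where μ(Λ) = sup_{w ∈ K̃^d} inf_{u ∈ Λ} ∏_{i=1}^d |w_i − u_i|. -/
noncomputable section

open scoped Classical

variable (Fq : Type) [Field Fq] [Fintype Fq]

/-- `K̃ = 𝔽_q((x⁻¹))`, realized as formal Laurent series in `t = x⁻¹`. -/
abbrev Kt := LaurentSeries Fq

/-- The element `x` of `K̃` (the inverse of the Laurent series variable). -/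
def Kx : Kt Fq := HahnSeries.single (-1 : ℤ) 1

/-- Absolute value `|f| = q^{deg f}`, i.e. `q^{-order f}` in terms of `t = x⁻¹`. -/
def Kabs (f : Kt Fq) : ℝ := if f = 0 then 0 else (Fintype.card Fq : ℝ) ^ (-f.order)

/-- The ring embedding of `R = 𝔽_q[x]` into `K̃`. -/
def polyK : Polynomial Fq →+* Kt Fq := (Polynomial.aeval (Kx Fq)).toRingHom

/-- Sup norm on `K̃^d`. -/
def vnorm {d : ℕ} (v : Fin d → Kt Fq) : ℝ := ⨆ i, Kabs Fq (v i)

/-- The lattice `g·R^d`. -/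
def lattice {d : ℕ} (g : Matrix (Fin d) (Fin d) (Kt Fq)) : Set (Fin d → Kt Fq) :=
  {v | ∃ c : Fin d → Polynomial Fq, v = g.mulVec fun j => polyK Fq (c j)}

/-- `i`-th successive minimum of `Λ` with respect to a norm `nrm`: the least `r > 0` such that
`Λ` contains `i` linearly independent vectors of norm at most `r`. -/
def minimaN {d : ℕ} (nrm : (Fin d → Kt Fq) → ℝ) (Λ : Set (Fin d → Kt Fq)) (i : ℕ) : ℝ :=
  sInf {r : ℝ | 0 < r ∧ ∃ v : Fin i → Fin d → Kt Fq,
    (∀ j, v j ∈ Λ) ∧ LinearIndependent (Kt Fq) v ∧ ∀ j, nrm (v j) ≤ r}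

/-- `i`-th successive minimum with respect to the sup norm. -/
def minima {d : ℕ} (Λ : Set (Fin d → Kt Fq)) (i : ℕ) : ℝ := minimaN Fq (vnorm Fq) Λ i

/-- Covering radius of `Λ` with respect to the norm `nrm`. -/
def covRad {d : ℕ} (nrm : (Fin d → Kt Fq) → ℝ) (Λ : Set (Fin d → Kt Fq)) : ℝ :=
  ⨆ w : Fin d → Kt Fq, ⨅ u : Λ, nrm (w - u.1)

/-- Length of the shortest nonzero vector of `Λ`. -/
def ell {d : ℕ} (Λ : Set (Fin d → Kt Fq)) : ℝ :=
  sInf {r : ℝ | ∃ v ∈ Λ, v ≠ 0 ∧ vnorm Fq v = r}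

/-- `Λ` is well rounded: it contains `d` linearly independent vectors of norm `ℓ(Λ)`. -/
def IsWellRounded {d : ℕ} (Λ : Set (Fin d → Kt Fq)) : Prop :=
  ∃ v : Fin d → Fin d → Kt Fq, (∀ j, v j ∈ Λ) ∧ LinearIndependent (Kt Fq) v ∧
    ∀ j, vnorm Fq (v j) = ell Fq Λ

/-- The multiplicative "norm" `N(v) = ∏ |v i|`. -/
def Nprod {d : ℕ} (v : Fin d → Kt Fq) : ℝ := ∏ i, Kabs Fq (v i)

/-- The Minkowski function `μ(Λ) = sup_w inf_{u ∈ Λ} N(w - u)`. -/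
def mink {d : ℕ} (Λ : Set (Fin d → Kt Fq)) : ℝ :=
  ⨆ w : Fin d → Kt Fq, ⨅ u : Λ, Nprod Fq (w - u.1)

/-! Minkowski's theorem over `𝔽_q[x]`: a unimodular lattice contains a nonzero vector of norm
`≤ 1`. Keep `d` lattice vectors as columns `x ^ m j • P_j` with `P_j` over `𝔽_q[[x⁻¹]]` and
`|det| = 1`, which forces `∑ m j ≥ 0`. If the constant terms of `P` have a kernel vector `c`, let
`j₀` maximise `m` on the support of `c`: the lattice vector `∑ c l x ^ (m j₀ - m l) • x ^ m l • P_l`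
equals `x ^ m j₀ • ∑ c l P_l`, whose power series part has zero constant term, so it replaces column
`j₀` with `|det|` unchanged and `∑ m j` lowered by one. Otherwise `det P` is a unit, so
`∑ m j = 0` and a column with `m j ≤ 0` is short.

Hence `ℓ(Λ) ≤ 1`, and a well rounded `Λ` has a `K̃`-basis `v` in `Λ` with all entries of absolute
value `≤ 1`. For `w = ∑ a j v j`, subtracting `∑ p j v j ∈ Λ`, where `p j` is the polynomial part
of `a j`, leaves a vector with every coordinate of absolute value `≤ q⁻¹`, so `N(w - u) ≤ q ^ (-d)`.
-/

theorem prod_zpow_eq_zpow_sum₀ {G ι : Type*} [CommGroupWithZero G] {a : G} (ha : a ≠ 0)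
    (s : Finset ι) (m : ι → ℤ) : ∏ i ∈ s, a ^ m i = a ^ ∑ i ∈ s, m i := by
  induction s using Finset.cons_induction with
  | empty => simp
  | cons i s hi ih => rw [Finset.prod_cons, Finset.sum_cons, ih, zpow_add₀ ha]

section
open HahnSeries
variable {F : Type} [Field F]

theorem Kx_ne_zero : Kx F ≠ 0 := single_ne_zero one_ne_zero

theorem coe_X_eq_Kx_inv : ((PowerSeries.X : PowerSeries F) : Kt F) = (Kx F)⁻¹ := by
  refine eq_inv_of_mul_eq_one_left ?_
  rw [ofPowerSeries_X, Kx, single_mul_single]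
  simp

@[simp]
theorem polyK_X : polyK F Polynomial.X = Kx F := by
  simp [polyK]

@[simp]
theorem polyK_C (c : F) : polyK F (Polynomial.C c) = (PowerSeries.C c : PowerSeries F) := by
  simp only [polyK, AlgHom.toRingHom_eq_coe, RingHom.coe_coe, Polynomial.aeval_C,
    HahnSeries.algebraMap_apply', PowerSeries.algebraMap_apply, Algebra.algebraMap_self,
    RingHom.id_apply]

theorem polyK_C_mul_X_pow (c : F) (k : ℕ) :
    polyK F (Polynomial.C c * Polynomial.X ^ k) = single (-(k : ℤ)) c := by
  simp [Kx, single_pow, single_mul_single]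

variable {d : ℕ} {g : Matrix (Fin d) (Fin d) (Kt F)}

theorem sum_smul_mem_lattice {ι : Type*} [Fintype ι] (p : ι → Polynomial F)
    {v : ι → Fin d → Kt F} (hv : ∀ l, v l ∈ lattice F g) :
    ∑ l, polyK F (p l) • v l ∈ lattice F g := by
  choose c hc using hv
  refine ⟨fun j => ∑ l, p l * c l j, ?_⟩
  simp only [map_sum, map_mul, hc, ← Matrix.mulVec_smul, ← Matrix.mulVec_sum]
  congr 1
  ext j
  simp

theorem col_mem_lattice (j : Fin d) : g.col j ∈ lattice F g :=
  ⟨Pi.single j 1, by rw [← Matrix.mulVec_single_one]; congr 1; ext k; simp [Pi.single_apply]⟩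

/-- The entries of `P` are read in `𝔽_q[[x⁻¹]] ⊆ K̃`, so column `j` has entries of absolute value
at most `q ^ m j`. -/
def scaledMatrix (P : Matrix (Fin d) (Fin d) (PowerSeries F)) (m : Fin d → ℤ) :
    Matrix (Fin d) (Fin d) (Kt F) :=
  Matrix.of fun i j => (P i j : Kt F) * Kx F ^ m j

theorem scaledMatrix_updateCol {P : Matrix (Fin d) (Fin d) (PowerSeries F)} {m : Fin d → ℤ}
    {c : Fin d → F} {j0 : Fin d} {Q : Fin d → PowerSeries F} (hmax : ∀ l, c l ≠ 0 → m l ≤ m j0)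
    (hQ : ∀ i, ∑ l, P i l * PowerSeries.C (c l) = PowerSeries.X * Q i) :
    scaledMatrix (P.updateCol j0 Q) (Function.update m j0 (m j0 - 1)) =
      (scaledMatrix P m).updateCol j0 fun i =>
        ∑ l, polyK F (Polynomial.C (c l) * Polynomial.X ^ (m j0 - m l).toNat) •
          scaledMatrix P m i l := by
  have hterm : ∀ i l,
      polyK F (Polynomial.C (c l) * Polynomial.X ^ (m j0 - m l).toNat) * scaledMatrix P m i l =
        ((P i l * PowerSeries.C (c l) : PowerSeries F) : Kt F) * Kx F ^ m j0 := by
    intro i l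
    by_cases hcl : c l = 0
    · simp [hcl]
    have hsplit : Kx F ^ m j0 = Kx F ^ (m j0 - m l) * Kx F ^ m l := by
      rw [← zpow_add₀ Kx_ne_zero, sub_add_cancel]
    simp only [scaledMatrix, map_mul, map_pow, polyK_C, polyK_X, Matrix.of_apply]
    rw [← zpow_natCast, Int.toNat_of_nonneg (by linarith [hmax l hcl]), hsplit]
    ring
  refine Matrix.ext fun i j => ?_
  rcases eq_or_ne j j0 with rfl | hj
  · simp only [Matrix.updateCol_self, smul_eq_mul, hterm, ← Finset.sum_mul, ← map_sum, hQ]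
    simp only [scaledMatrix, Matrix.of_apply, Matrix.updateCol_self, Function.update_self]
    rw [map_mul, coe_X_eq_Kx_inv, zpow_sub_one₀ Kx_ne_zero]
    ring
  · simp [scaledMatrix, Matrix.updateCol_ne hj, Function.update_of_ne hj]

end

section
open HahnSeries
variable {Fq}
local notation "q" => (Fintype.card Fq : ℝ)

theorem one_lt_cast_card : 1 < q := by
  exact_mod_cast Fintype.one_lt_card

theorem cast_card_pos : 0 < q := zero_lt_one.trans one_lt_cast_card

theorem Kabs_nonneg (f : Kt Fq) : 0 ≤ Kabs Fq f := by
  unfold Kabs; split_ifs <;> positivity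

theorem Kabs_zero : Kabs Fq 0 = 0 := if_pos rfl

theorem Kabs_mul (f g : Kt Fq) : Kabs Fq (f * g) = Kabs Fq f * Kabs Fq g := by
  unfold Kabs
  by_cases hf : f = 0
  · simp [hf]
  by_cases hg : g = 0
  · simp [hg]
  rw [if_neg hf, if_neg hg, if_neg (mul_ne_zero hf hg), order_mul hf hg, neg_add,
    zpow_add₀ cast_card_pos.ne']

theorem Kabs_single {a : ℤ} {c : Fq} (hc : c ≠ 0) : Kabs Fq (single a c) = q ^ (-a) := by
  rw [Kabs, if_neg (single_ne_zero hc), order_single hc]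

def KabsHom : Kt Fq →*₀ ℝ where
  toFun := Kabs Fq
  map_zero' := Kabs_zero
  map_one' := by simpa using Kabs_single (Fq := Fq) (a := 0) one_ne_zero
  map_mul' := Kabs_mul

theorem Kabs_Kx_zpow (m : ℤ) : Kabs Fq (Kx Fq ^ m) = q ^ m := by
  change KabsHom (Kx Fq ^ m) = _
  rw [map_zpow₀]
  change Kabs Fq (single (-1) 1) ^ m = _
  rw [Kabs_single one_ne_zero, neg_neg, zpow_one]

theorem Kabs_le_zpow_iff {f : Kt Fq} {m : ℤ} :
    Kabs Fq f ≤ q ^ m ↔ ∀ n < -m, f.coeff n = 0 := by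
  unfold Kabs
  split_ifs with h
  · simp [h, zpow_nonneg cast_card_pos.le]
  rw [zpow_le_zpow_iff_right₀ one_lt_cast_card]
  refine ⟨fun hm n hn => coeff_eq_zero_of_lt_order (by omega), fun hs => ?_⟩
  by_contra hc
  exact (mt coeff_order_eq_zero.1 h) (hs _ (by omega))

theorem zpow_le_Kabs_of_coeff_ne_zero {f : Kt Fq} {n : ℤ} (h : f.coeff n ≠ 0) :
    q ^ (-n) ≤ Kabs Fq f := by
  have hf : f ≠ 0 := by rintro rfl; exact h coeff_zero
  rw [Kabs, if_neg hf]
  exact zpow_le_zpow_right₀ one_lt_cast_card.le (neg_le_neg (order_le_of_coeff_ne_zero h))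

theorem Kabs_sum_le {ι : Type*} (s : Finset ι) (f : ι → Kt Fq) {m : ℤ}
    (h : ∀ i ∈ s, Kabs Fq (f i) ≤ q ^ m) : Kabs Fq (∑ i ∈ s, f i) ≤ q ^ m := by
  refine Kabs_le_zpow_iff.2 fun n hn => ?_
  rw [coeff_sum]
  exact Finset.sum_eq_zero fun i hi => Kabs_le_zpow_iff.1 (h i hi) n hn

theorem Kabs_coe_le_one (p : PowerSeries Fq) : Kabs Fq p ≤ 1 := by
  rw [← zpow_zero q, Kabs_le_zpow_iff]
  intro n hn
  rw [PowerSeries.coeff_coe, if_pos (by omega)]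

theorem Kabs_coe_eq_one {p : PowerSeries Fq} (hp : PowerSeries.constantCoeff p ≠ 0) :
    Kabs Fq p = 1 := by
  refine (Kabs_coe_le_one p).antisymm ?_
  have h0 : (p : Kt Fq).coeff 0 ≠ 0 := by simpa [PowerSeries.coeff_coe] using hp
  simpa using zpow_le_Kabs_of_coeff_ne_zero h0

theorem order_nonneg_of_Kabs_le_one {f : Kt Fq} (hf : Kabs Fq f ≤ 1) : 0 ≤ f.order := by
  by_cases h : f = 0
  · simp [h]
  rw [Kabs, if_neg h, ← zpow_zero q, zpow_le_zpow_iff_right₀ one_lt_cast_card] at hf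
  omega

theorem exists_coe_mul_zpow_of_Kabs_le {f : Kt Fq} {m : ℤ} (hf : Kabs Fq f ≤ q ^ m) :
    ∃ p : PowerSeries Fq, f = p * Kx Fq ^ m := by
  set f' := f * Kx Fq ^ (-m)
  have hf' : Kabs Fq f' ≤ 1 := by
    rw [Kabs_mul, Kabs_Kx_zpow, zpow_neg, ← div_eq_mul_inv, div_le_one (zpow_pos cast_card_pos m)]
    exact hf
  refine ⟨PowerSeries.X ^ f'.order.toNat * f'.powerSeriesPart, ?_⟩
  rw [LaurentSeries.X_order_mul_powerSeriesPart (Int.toNat_of_nonneg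
    (order_nonneg_of_Kabs_le_one hf')), mul_assoc, ← zpow_add₀ Kx_ne_zero, neg_add_cancel,
    zpow_zero, mul_one]

theorem Kabs_sub_single_coeff_le {f : Kt Fq} {k : ℤ} (hf : Kabs Fq f ≤ q ^ k) :
    Kabs Fq (f - single (-k) (f.coeff (-k))) ≤ q ^ (k - 1) := by
  rw [Kabs_le_zpow_iff] at hf ⊢
  intro n hn
  rw [coeff_sub, coeff_single]
  rcases (show n ≤ -k by omega).lt_or_eq with h | rfl
  · rw [hf n h, if_neg h.ne, sub_zero]
  · simp

theorem exists_Kabs_sub_polyK_le (f : Kt Fq) :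
    ∃ p : Polynomial Fq, Kabs Fq (f - polyK Fq p) ≤ q ^ (-1 : ℤ) := by
  suffices h : ∀ N : ℕ, ∀ f : Kt Fq, Kabs Fq f ≤ q ^ ((N : ℤ) - 1) →
      ∃ p : Polynomial Fq, Kabs Fq (f - polyK Fq p) ≤ q ^ (-1 : ℤ) by
    obtain ⟨N, hN⟩ := pow_unbounded_of_one_lt (Kabs Fq f) (one_lt_cast_card (Fq := Fq))
    exact h (N + 1) f (by simpa using hN.le)
  intro N
  induction N with
  | zero => exact fun f hf => ⟨0, by simpa using hf⟩
  | succ N ih =>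
    intro f hf
    obtain ⟨p, hp⟩ := ih _ (Kabs_sub_single_coeff_le (k := N) (by simpa using hf))
    refine ⟨p + Polynomial.C (f.coeff (-N)) * Polynomial.X ^ N, ?_⟩
    rwa [map_add, polyK_C_mul_X_pow, sub_add_eq_sub_sub_swap]

open Matrix

variable {d : ℕ}

theorem Kabs_det_scaledMatrix (P : Matrix (Fin d) (Fin d) (PowerSeries Fq)) (m : Fin d → ℤ) :
    Kabs Fq (scaledMatrix P m).det = Kabs Fq P.det * q ^ ∑ j, m j := by
  have h : scaledMatrix P m = P.map (ofPowerSeries ℤ Fq) * diagonal (Kx Fq ^ m ·) := by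
    ext i j
    simp [scaledMatrix]
  rw [h, det_mul, det_diagonal, RingHom.map_det]
  change KabsHom _ = _
  rw [map_mul, map_prod]
  simp only [KabsHom, MonoidWithZeroHom.coe_mk, ZeroHom.coe_mk, Kabs_Kx_zpow,
    prod_zpow_eq_zpow_sum₀ cast_card_pos.ne']
  rfl

def IsUnimodularFrame (g : Matrix (Fin d) (Fin d) (Kt Fq))
    (P : Matrix (Fin d) (Fin d) (PowerSeries Fq)) (m : Fin d → ℤ) : Prop :=
  (∀ j, (scaledMatrix P m).col j ∈ lattice Fq g) ∧ Kabs Fq (scaledMatrix P m).det = 1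

variable {g : Matrix (Fin d) (Fin d) (Kt Fq)} {P : Matrix (Fin d) (Fin d) (PowerSeries Fq)}
  {m : Fin d → ℤ}

theorem IsUnimodularFrame.sum_nonneg (h : IsUnimodularFrame g P m) : 0 ≤ ∑ j, m j := by
  have h1 : (1 : ℝ) ≤ q ^ ∑ j, m j :=
    calc (1 : ℝ) = Kabs Fq P.det * q ^ ∑ j, m j := by rw [← Kabs_det_scaledMatrix, h.2]
      _ ≤ q ^ ∑ j, m j := mul_le_of_le_one_left (zpow_pos cast_card_pos _).le (Kabs_coe_le_one _)
  exact (one_le_zpow_iff_right₀ one_lt_cast_card).1 h1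

theorem IsUnimodularFrame.exists_short_of_det_ne_zero (hd : 0 < d) (h : IsUnimodularFrame g P m)
    (h0 : (P.map PowerSeries.constantCoeff).det ≠ 0) :
    ∃ v ∈ lattice Fq g, v ≠ 0 ∧ ∀ i, Kabs Fq (v i) ≤ 1 := by
  have hdet := h.2
  rw [Kabs_det_scaledMatrix, Kabs_coe_eq_one (by rwa [RingHom.map_det]), one_mul,
    zpow_eq_one_iff_right₀ cast_card_pos.le one_lt_cast_card.ne'] at hdet
  obtain ⟨j, hj⟩ : ∃ j, m j ≤ 0 := by
    by_contra! hpos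
    have : 0 < ∑ j, m j := Finset.sum_pos (fun j _ => hpos j) ⟨⟨0, hd⟩, Finset.mem_univ _⟩
    omega
  refine ⟨(scaledMatrix P m).col j, h.1 j, fun hcol => ?_, fun i => ?_⟩
  · have := h.2
    rw [det_eq_zero_of_column_eq_zero j (congrFun hcol), Kabs_zero] at this
    exact zero_ne_one this
  · calc Kabs Fq ((scaledMatrix P m).col j i) = Kabs Fq (P i j) * q ^ m j := by
          simp [scaledMatrix, Kabs_mul, Kabs_Kx_zpow]
      _ ≤ 1 * 1 := by
          gcongr
          · exact Kabs_coe_le_one _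
          · exact zpow_le_one_of_nonpos₀ one_lt_cast_card.le hj
      _ = 1 := one_mul 1

theorem IsUnimodularFrame.exists_sum_eq_sub_one_of_det_eq_zero (h : IsUnimodularFrame g P m)
    (h0 : (P.map PowerSeries.constantCoeff).det = 0) :
    ∃ P' m', IsUnimodularFrame g P' m' ∧ ∑ j, m' j = ∑ j, m j - 1 := by
  obtain ⟨c, hc0, hc⟩ := exists_mulVec_eq_zero_iff.2 h0
  obtain ⟨j0, hj0, hmax⟩ := Finset.exists_max_image {l | c l ≠ 0} m
    (by simpa [Finset.filter_nonempty_iff, Function.ne_iff] using hc0)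
  simp only [Finset.mem_filter, Finset.mem_univ, true_and] at hj0 hmax
  have hX : ∀ i, PowerSeries.X ∣ (P *ᵥ (PowerSeries.C ∘ c)) i := fun i => by
    rw [PowerSeries.X_dvd_iff, RingHom.map_mulVec]
    simpa [Function.comp_def] using congrFun hc i
  choose Q hQ using hX
  have hkey := scaledMatrix_updateCol (P := P) hmax hQ
  refine ⟨P.updateCol j0 Q, Function.update m j0 (m j0 - 1), ⟨fun j => ?_, ?_⟩, ?_⟩
  · rw [hkey]
    rcases eq_or_ne j j0 with rfl | hj
    · convert sum_smul_mem_lattice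
        (fun l => Polynomial.C (c l) * Polynomial.X ^ (m j - m l).toNat) h.1 using 1
      ext i
      simp [Finset.sum_apply]
    · convert h.1 j using 1
      ext i
      simp [updateCol_ne hj]
  · rw [hkey, det_updateCol_sum, smul_eq_mul, Kabs_mul, h.2, mul_one]
    simp [Kabs_single hj0]
  · rw [Finset.sum_update_of_mem (Finset.mem_univ j0), Finset.sdiff_singleton_eq_erase,
      ← Finset.add_sum_erase _ m (Finset.mem_univ j0)]
    ring

theorem IsUnimodularFrame.exists_short (hd : 0 < d) (h : IsUnimodularFrame g P m) :
    ∃ v ∈ lattice Fq g, v ≠ 0 ∧ ∀ i, Kabs Fq (v i) ≤ 1 := by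
  obtain ⟨n, hn⟩ := Int.eq_ofNat_of_zero_le h.sum_nonneg
  induction n using Nat.strong_induction_on generalizing P m with
  | _ n ih =>
    by_cases h0 : (P.map PowerSeries.constantCoeff).det = 0
    · obtain ⟨P', m', h', hsum⟩ := h.exists_sum_eq_sub_one_of_det_eq_zero h0
      obtain ⟨n', hn'⟩ := Int.eq_ofNat_of_zero_le h'.sum_nonneg
      exact ih n' (by omega) h' hn'
    · exact h.exists_short_of_det_ne_zero hd h0

theorem exists_isUnimodularFrame (hg : Kabs Fq g.det = 1) : ∃ P m, IsUnimodularFrame g P m := by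
  obtain ⟨B, hB⟩ := (Set.finite_range fun ij : Fin d × Fin d => Kabs Fq (g ij.1 ij.2)).bddAbove
  obtain ⟨M, hM⟩ := pow_unbounded_of_one_lt B (one_lt_cast_card (Fq := Fq))
  have hbound : ∀ i j, Kabs Fq (g i j) ≤ q ^ (M : ℤ) := fun i j =>
    (hB ⟨(i, j), rfl⟩).trans (by rw [zpow_natCast]; exact hM.le)
  choose P hP using fun i j => exists_coe_mul_zpow_of_Kabs_le (hbound i j)
  have hgP : scaledMatrix P (fun _ => (M : ℤ)) = g := Matrix.ext fun i j => (hP i j).symm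
  exact ⟨P, fun _ => M, fun j => hgP ▸ col_mem_lattice j, hgP ▸ hg⟩

theorem exists_mem_lattice_ne_zero_Kabs_le_one (hd : 0 < d) (hg : Kabs Fq g.det = 1) :
    ∃ v ∈ lattice Fq g, v ≠ 0 ∧ ∀ i, Kabs Fq (v i) ≤ 1 :=
  let ⟨_, _, h⟩ := exists_isUnimodularFrame hg
  h.exists_short hd

theorem vnorm_nonneg (v : Fin d → Kt Fq) : 0 ≤ vnorm Fq v :=
  Real.iSup_nonneg fun i => Kabs_nonneg (v i)

theorem Kabs_le_vnorm (v : Fin d → Kt Fq) (i : Fin d) : Kabs Fq (v i) ≤ vnorm Fq v :=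
  le_ciSup (f := fun i => Kabs Fq (v i)) (Set.finite_range _).bddAbove i

theorem ell_lattice_le_one (hd : 0 < d) (hg : Kabs Fq g.det = 1) : ell Fq (lattice Fq g) ≤ 1 := by
  obtain ⟨v, hv, hv0, hv1⟩ := exists_mem_lattice_ne_zero_Kabs_le_one hd hg
  have : Nonempty (Fin d) := ⟨⟨0, hd⟩⟩
  unfold ell
  have hbdd : BddBelow {r : ℝ | ∃ v ∈ lattice Fq g, v ≠ 0 ∧ vnorm Fq v = r} := by
    refine ⟨0, ?_⟩
    rintro _ ⟨w, -, -, rfl⟩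
    exact vnorm_nonneg w
  exact (csInf_le hbdd ⟨v, hv, hv0, rfl⟩).trans (ciSup_le hv1)

theorem IsWellRounded.exists_basis_Kabs_le_one (hg : Kabs Fq g.det = 1)
    (hwr : IsWellRounded Fq (lattice Fq g)) :
    ∃ v : Fin d → Fin d → Kt Fq, (∀ j, v j ∈ lattice Fq g) ∧ LinearIndependent (Kt Fq) v ∧
      ∀ j i, Kabs Fq (v j i) ≤ 1 := by
  obtain ⟨v, hvΛ, hv, hnorm⟩ := hwr
  exact ⟨v, hvΛ, hv, fun j i =>
    (Kabs_le_vnorm _ i).trans ((hnorm j).trans_le (ell_lattice_le_one j.pos hg))⟩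

theorem exists_mem_lattice_Kabs_sub_le {v : Fin d → Fin d → Kt Fq}
    (hvΛ : ∀ j, v j ∈ lattice Fq g) (hv : LinearIndependent (Kt Fq) v) {r : ℤ}
    (hvr : ∀ j i, Kabs Fq (v j i) ≤ q ^ r) (w : Fin d → Kt Fq) :
    ∃ u ∈ lattice Fq g, ∀ i, Kabs Fq ((w - u) i) ≤ q ^ (r - 1) := by
  obtain ⟨a, rfl⟩ : ∃ a : Fin d → Kt Fq, ∑ j, a j • v j = w := by
    rw [← Submodule.mem_span_range_iff_exists_fun, hv.span_eq_top_of_card_eq_finrank' (by simp)]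
    trivial
  choose p hp using fun j => exists_Kabs_sub_polyK_le (a j)
  refine ⟨∑ j, polyK Fq (p j) • v j, sum_smul_mem_lattice p hvΛ, fun i => ?_⟩
  simp only [← Finset.sum_sub_distrib, ← sub_smul, Finset.sum_apply, Pi.smul_apply, smul_eq_mul]
  refine Kabs_sum_le _ _ fun j _ => ?_
  calc Kabs Fq ((a j - polyK Fq (p j)) * v j i) ≤ q ^ (-1 : ℤ) * q ^ r := by
        rw [Kabs_mul]; gcongr; exacts [Kabs_nonneg _, hp j, hvr j i]
    _ = q ^ (r - 1) := by rw [← zpow_add₀ cast_card_pos.ne']; ring_nf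

theorem mink_le_of_forall_exists_Kabs_sub_le {Λ : Set (Fin d → Kt Fq)} {r : ℤ}
    (h : ∀ w, ∃ u ∈ Λ, ∀ i, Kabs Fq ((w - u) i) ≤ q ^ r) : mink Fq Λ ≤ q ^ (d * r) := by
  refine Real.iSup_le (fun w => ?_) (zpow_pos cast_card_pos _).le
  obtain ⟨u, hu, hwu⟩ := h w
  have hbdd : BddBelow (Set.range fun u : Λ => Nprod Fq (w - u.1)) :=
    ⟨0, by rintro _ ⟨u, rfl⟩; exact Finset.prod_nonneg fun i _ => Kabs_nonneg _⟩
  calc ⨅ u : Λ, Nprod Fq (w - u.1) ≤ Nprod Fq (w - u) := ciInf_le hbdd ⟨u, hu⟩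
    _ ≤ ∏ _i : Fin d, q ^ r := Finset.prod_le_prod (fun i _ => Kabs_nonneg _) fun i _ => hwu i
    _ = q ^ (d * r) := by rw [prod_zpow_eq_zpow_sum₀ cast_card_pos.ne']; simp

end

theorem mink_le_of_wellRounded {d : ℕ}
    (g : Matrix (Fin d) (Fin d) (Kt Fq)) (hg : Kabs Fq g.det = 1)
    (hwr : IsWellRounded Fq (lattice Fq g)) :
    mink Fq (lattice Fq g) ≤ (Fintype.card Fq : ℝ) ^ (-(d : ℤ)) := by
  obtain ⟨v, hvΛ, hv, hv1⟩ := hwr.exists_basis_Kabs_le_one hg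
  have hcover := exists_mem_lattice_Kabs_sub_le hvΛ hv (r := 0) (by simpa using hv1)
  simpa using mink_le_of_forall_exists_Kabs_sub_le hcover
end
end

section
/- Let n ≥ 1, let θ₁,…,θ_n ∈ K̃ with |θ_i| ≤ q^{-1} for each i (i.e. θ_i ∈ x^{-1}O), and let t₁,…,t_n ≥ 0 be integers. Then there exist polynomials a, b₁,…,b_n ∈ R = 𝔽_q[x] with (b₁,…,b_n) ≠ (0,…,0) such that |b₁θ₁ + … + b_nθ_n − a| ≤ q^{-(t₁+…+t_n+n)} and |b_i| ≤ q^{t_i} for every i = 1,…,n. (Improved Dirichlet theorem over 𝔽_q((x^{-1})).) -/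
noncomputable section

open scoped Classical

variable (Fq : Type) [Field Fq] [Fintype Fq]

/-! The coefficients of `x⁻¹, …, x^{-(T+n-1)}` in `b₁θ₁ + ⋯ + b_nθ_n`, where `T = ∑ tᵢ`, are
`T + n - 1` linear forms over `𝔽_q` in the `T + n` coefficients of polynomials with
`deg bᵢ ≤ tᵢ`, so some nonzero `b` annihilates all of them. Subtracting the polynomial part `a`
of `∑ bᵢθᵢ` then leaves a series whose first nonzero coefficient is at `x^{-(T+n)}` or beyond. -/

open Polynomial

section Algebraic

variable {F : Type} [Field F]

lemma algebraMap_Kt_apply (c : F) : algebraMap F (Kt F) c = HahnSeries.single 0 c := by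
  rw [HahnSeries.algebraMap_apply', PowerSeries.algebraMap_apply, Algebra.algebraMap_self_apply,
    HahnSeries.ofPowerSeries_C, HahnSeries.C_apply]

lemma polyK_monomial (k : ℕ) (c : F) :
    polyK F (monomial k c) = HahnSeries.single (-(k : ℤ)) c := by
  change aeval (Kx F) (monomial k c) = _
  rw [aeval_monomial, algebraMap_Kt_apply, Kx, HahnSeries.single_pow, HahnSeries.single_mul_single]
  simp

lemma polyK_smul (c : F) (p : F[X]) : polyK F (c • p) = HahnSeries.single 0 c * polyK F p := by
  rw [smul_eq_C_mul, map_mul, ← monomial_zero_left, polyK_monomial, Nat.cast_zero, neg_zero]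

lemma coeff_polyK (p : F[X]) (m : ℤ) :
    (polyK F p).coeff m = if m ≤ 0 then p.coeff (-m).toNat else 0 := by
  induction p using Polynomial.induction_on' with
  | add p q hp hq =>
    rw [map_add, HahnSeries.coeff_add, hp, hq, coeff_add]
    split_ifs <;> simp
  | monomial k c =>
    rw [polyK_monomial, HahnSeries.coeff_single, coeff_monomial]
    split_ifs <;> first | rfl | omega

def polyPart (f : Kt F) : F[X] :=
  ∑ k ∈ Finset.range ((-f.order).toNat + 1), monomial k (f.coeff (-k))

lemma coeff_polyPart (f : Kt F) (k : ℕ) : (polyPart f).coeff k = f.coeff (-k) := by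
  simp only [polyPart, finsetSum_coeff, coeff_monomial, Finset.sum_ite_eq', Finset.mem_range]
  split_ifs with hk
  · rfl
  · exact (HahnSeries.coeff_eq_zero_of_lt_order (by omega)).symm

lemma coeff_sub_polyK_polyPart (f : Kt F) (m : ℤ) :
    (f - polyK F (polyPart f)).coeff m = if m ≤ 0 then 0 else f.coeff m := by
  rw [HahnSeries.coeff_sub, coeff_polyK, coeff_polyPart]
  split_ifs with hm
  · rw [show -((-m).toNat : ℤ) = m by omega, sub_self]
  · rw [sub_zero]

def coeffsOfSumMul {n : ℕ} (θ : Fin n → Kt F) (t : Fin n → ℕ) (S : Finset ℤ) :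
    (∀ i, degreeLT F (t i + 1)) →ₗ[F] (S → F) where
  toFun b m := (∑ i, polyK F (b i) * θ i).coeff m
  map_add' b c := by
    ext m
    simp [add_mul, Finset.sum_add_distrib]
  map_smul' c b := by
    ext m
    simp only [SetLike.val_smul, polyK_smul, mul_assoc, ← Finset.mul_sum,
      HahnSeries.coeff_single_zero_mul, RingHom.id_apply, Pi.smul_apply, smul_eq_mul]

lemma exists_ne_zero_coeff_sum_mul_eq_zero {n : ℕ} (θ : Fin n → Kt F) (t : Fin n → ℕ)
    (S : Finset ℤ) (hS : S.card < ∑ i, (t i + 1)) :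
    ∃ b : Fin n → F[X], b ≠ 0 ∧ (∀ i, (b i).natDegree ≤ t i) ∧
      ∀ m ∈ S, (∑ i, polyK F (b i) * θ i).coeff m = 0 := by
  have hdim : Module.finrank F (S → F) < Module.finrank F (∀ i, degreeLT F (t i + 1)) := by
    simpa [Module.finrank_pi_fintype, (degreeLTEquiv F _).finrank_eq] using hS
  obtain ⟨x, hx, hx0⟩ := (Submodule.ne_bot_iff _).mp
    (LinearMap.ker_ne_bot_of_finrank_lt (f := coeffsOfSumMul θ t S) hdim)
  refine ⟨fun i => x i, fun h => hx0 (funext fun i => Subtype.ext (congrFun h i)), fun i => ?_,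
    fun m hm => congrFun hx ⟨m, hm⟩⟩
  have hxi : (x i : F[X]) ∈ degreeLE F (t i) := degreeLT_succ_eq_degreeLE (R := F) ▸ (x i).2
  exact natDegree_le_iff_degree_le.mpr (mem_degreeLE.mp hxi)

end Algebraic

section Absolute

variable {Fq}

lemma one_lt_card_real : (1 : ℝ) < Fintype.card Fq := by
  exact_mod_cast Fintype.one_lt_card

lemma Kabs_le_zpow_neg_iff {f : Kt Fq} {k : ℤ} :
    Kabs Fq f ≤ (Fintype.card Fq : ℝ) ^ (-k) ↔ ∀ m < k, f.coeff m = 0 := by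
  unfold Kabs
  split_ifs with hf
  · simp [hf, zpow_nonneg]
  · rw [zpow_le_zpow_iff_right₀ one_lt_card_real, neg_le_neg_iff]
    refine ⟨fun h m hm => HahnSeries.coeff_eq_zero_of_lt_order (hm.trans_le h), fun h => ?_⟩
    by_contra! hk
    exact hf (HahnSeries.coeff_order_eq_zero.mp (h _ hk))

lemma Kabs_polyK_le (p : Fq[X]) :
    Kabs Fq (polyK Fq p) ≤ (Fintype.card Fq : ℝ) ^ (p.natDegree : ℤ) := by
  rw [← neg_neg (p.natDegree : ℤ), Kabs_le_zpow_neg_iff]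
  intro m hm
  rw [coeff_polyK, if_pos (by omega)]
  exact coeff_eq_zero_of_natDegree_lt (by omega)

end Absolute

theorem improved_dirichlet (n : ℕ) (hn : 1 ≤ n)
    (θ : Fin n → Kt Fq)
    (t : Fin n → ℕ) :
    ∃ (a : Polynomial Fq) (b : Fin n → Polynomial Fq), b ≠ 0 ∧
      Kabs Fq (∑ i, polyK Fq (b i) * θ i - polyK Fq a)
        ≤ (Fintype.card Fq : ℝ) ^ (-((∑ i, t i : ℕ) + (n : ℤ))) ∧
      ∀ i, Kabs Fq (polyK Fq (b i)) ≤ (Fintype.card Fq : ℝ) ^ (t i : ℤ) := by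
  set T := ∑ i, t i
  obtain ⟨b, hb0, hdeg, hcoeff⟩ := exists_ne_zero_coeff_sum_mul_eq_zero θ t
    (Finset.Ioo 0 ((T : ℤ) + n)) (by
      simp only [Int.card_Ioo, Finset.sum_add_distrib, Finset.sum_const, Finset.card_univ,
        Fintype.card_fin, smul_eq_mul, mul_one]
      omega)
  refine ⟨polyPart (∑ i, polyK Fq (b i) * θ i), b, hb0, ?_, fun i => ?_⟩
  · rw [Kabs_le_zpow_neg_iff]
    intro m hm
    rw [coeff_sub_polyK_polyPart]
    split_ifs with hm0
    · rfl
    · exact hcoeff m (Finset.mem_Ioo.mpr ⟨by omega, hm⟩)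
  · exact (Kabs_polyK_le _).trans
      (zpow_le_zpow_right₀ one_lt_card_real.le (by exact_mod_cast hdeg i))
end
end
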